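/- For every permutation σ of {1,2} and every non-negative integer n: (1) F_σ(n) = (F_σ(n) ∩ V₁) ⊕ (F_σ(n) ∩ V₂); (2) F_σ(n) = (F_σ(n) ∩ W₁) ⊕ (F_σ(n) ∩ W₂). -/

import Mathlib

open Submodule

/-- For a permutation `σ` of `{1,2}`, the increasing sequence of subspaces `F_σ(n)`:
`F_σ(0) = ⊥`, `F_σ(n+1) = Σ_i (F_σ(n) + Vᵢ) ⊓ (F_σ(n) + W_{σ(i)})`. -/
noncomputable def Fsig {K E : Type*} [Field K] [AddCommGroup E] [Module K E]
    (V W : Fin 2 → Submodule K E) (σ : Equiv.Perm (Fin 2)) : ℕ → Submodule K E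
  | 0 => ⊥
  | n + 1 => ⨆ i : Fin 2, (Fsig V W σ n ⊔ V i) ⊓ (Fsig V W σ n ⊔ W (σ i))

/-!
Let `π` be the projection onto `V₀` along `V₁`. A subspace `F` splits as
`(F ∩ V₀) ⊕ (F ∩ V₁)` exactly when `π F ⊆ F`, so it suffices that every `F_σ(n)` is
`π`-invariant. Inductively, if `F = F_σ(n)` is `π`-invariant and `x = f + v` lies in
`(F + Vᵢ) ∩ F_σ(n+1)` with `f ∈ F`, `v ∈ Vᵢ`, then `π x = π f ∈ F` if `i = 1`, and
`π x = x - (f - π f) ∈ F_σ(n+1)` if `i = 0`. The statement for `W` follows by symmetry,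
since `F_σ` for `(V, W)` is `F_{σ⁻¹}` for `(W, V)`.
-/

namespace Submodule

variable {R E : Type*} [Ring R] [AddCommGroup E] [Module R E] {A B : Submodule R E}

lemma inf_sup_inf_eq_of_mem_invtSubmodule_projection (hAB : IsCompl A B) {F : Submodule R E}
    (hF : F ∈ Module.End.invtSubmodule (A.projection B hAB)) : F ⊓ A ⊔ F ⊓ B = F := by
  refine le_antisymm (sup_le inf_le_left inf_le_left) fun x hx => ?_
  have hπx : A.projection B hAB x ∈ F := hF hx
  rw [← projection_add_projection_eq_self hAB x]
  exact add_mem_sup ⟨hπx, projection_apply_mem hAB x⟩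
    ⟨by rw [projection_eq_self_sub_projection hAB]; exact F.sub_mem hx hπx,
      projection_apply_mem hAB.symm x⟩

lemma map_projection_sup_inf_le (hAB : IsCompl A B) {F G S : Submodule R E}
    (hF : F ∈ Module.End.invtSubmodule (A.projection B hAB)) (hFG : F ≤ G)
    (hS : S = A ∨ S = B) :
    ((F ⊔ S) ⊓ G).map (A.projection B hAB) ≤ G := by
  rintro _ ⟨x, ⟨hx, hxG⟩, rfl⟩
  obtain ⟨f, hf, s, hs, rfl⟩ := mem_sup.1 hx
  have hπf : A.projection B hAB f ∈ F := hF hf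
  rcases hS with hS | hS <;> subst S
  · rw [map_add, projection_apply_of_mem_left hAB hs,
      show A.projection B hAB f + s = f + s - (f - A.projection B hAB f) by abel]
    exact G.sub_mem hxG (hFG (F.sub_mem hf hπf))
  · rw [map_add, (projection_apply_eq_zero_iff hAB).2 hs, add_zero]
    exact hFG hπf

end Submodule

section Fsig

variable {K E : Type*} [Field K] [AddCommGroup E] [Module K E] (V W : Fin 2 → Submodule K E)
  (σ : Equiv.Perm (Fin 2))

lemma le_Fsig_succ (n : ℕ) (i : Fin 2) :
    (Fsig V W σ n ⊔ V i) ⊓ (Fsig V W σ n ⊔ W (σ i)) ≤ Fsig V W σ (n + 1) :=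
  le_iSup (fun i => (Fsig V W σ n ⊔ V i) ⊓ (Fsig V W σ n ⊔ W (σ i))) i

lemma Fsig_le_succ (n : ℕ) : Fsig V W σ n ≤ Fsig V W σ (n + 1) :=
  (le_inf le_sup_left le_sup_left).trans (le_Fsig_succ V W σ n 0)

lemma Fsig_swap (n : ℕ) : Fsig W V σ⁻¹ n = Fsig V W σ n := by
  induction n with
  | zero => rfl
  | succ n ih =>
    refine Equiv.iSup_congr σ⁻¹ fun i => ?_
    simp only [ih, Equiv.Perm.coe_inv, Equiv.apply_symm_apply, inf_comm]

lemma Fsig_mem_invtSubmodule_projection (hV : IsCompl (V 0) (V 1)) (n : ℕ) :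
    Fsig V W σ n ∈ Module.End.invtSubmodule ((V 0).projection (V 1) hV) := by
  induction n with
  | zero => exact Module.End.invtSubmodule.bot_mem _
  | succ n ih =>
    rw [Module.End.mem_invtSubmodule_iff_map_le]
    refine (Submodule.map_iSup _ _).trans_le (iSup_le fun i => ?_)
    refine (map_mono (le_inf inf_le_left (le_Fsig_succ V W σ n i))).trans
      (map_projection_sup_inf_le hV ih (Fsig_le_succ V W σ n) ?_)
    fin_cases i <;> simp

end Fsig

theorem stmt10_general {K E : Type*} [Field K] [AddCommGroup E] [Module K E]
    (V W : Fin 2 → Submodule K E)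
    (hV : IsCompl (V 0) (V 1)) (hW : IsCompl (W 0) (W 1)) :
    ∀ (σ : Equiv.Perm (Fin 2)) (n : ℕ),
      (Disjoint (Fsig V W σ n ⊓ V 0) (Fsig V W σ n ⊓ V 1) ∧
        (Fsig V W σ n ⊓ V 0) ⊔ (Fsig V W σ n ⊓ V 1) = Fsig V W σ n) ∧
      (Disjoint (Fsig V W σ n ⊓ W 0) (Fsig V W σ n ⊓ W 1) ∧
        (Fsig V W σ n ⊓ W 0) ⊔ (Fsig V W σ n ⊓ W 1) = Fsig V W σ n) := by
  intro σ n
  have hinvV := Fsig_mem_invtSubmodule_projection V W σ hV n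
  have hinvW := Fsig_swap V W σ n ▸ Fsig_mem_invtSubmodule_projection W V σ⁻¹ hW n
  exact ⟨⟨hV.disjoint.mono inf_le_right inf_le_right,
      inf_sup_inf_eq_of_mem_invtSubmodule_projection hV hinvV⟩,
    ⟨hW.disjoint.mono inf_le_right inf_le_right,
      inf_sup_inf_eq_of_mem_invtSubmodule_projection hW hinvW⟩⟩

/-- For every permutation `σ` of `{1,2}` and every `n`,
`F_σ(n) = (F_σ(n) ∩ V₁) ⊕ (F_σ(n) ∩ V₂)` and `F_σ(n) = (F_σ(n) ∩ W₁) ⊕ (F_σ(n) ∩ W₂)`. -/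
theorem stmt10 {K E : Type*} [Field K] [AddCommGroup E] [Module K E]
    [FiniteDimensional K E] (hchar : (2 : K) ≠ 0)
    (V W : Fin 2 → Submodule K E)
    (hV : IsCompl (V 0) (V 1)) (hW : IsCompl (W 0) (W 1)) :
    ∀ (σ : Equiv.Perm (Fin 2)) (n : ℕ),
      (Disjoint (Fsig V W σ n ⊓ V 0) (Fsig V W σ n ⊓ V 1) ∧
        (Fsig V W σ n ⊓ V 0) ⊔ (Fsig V W σ n ⊓ V 1) = Fsig V W σ n) ∧
      (Disjoint (Fsig V W σ n ⊓ W 0) (Fsig V W σ n ⊓ W 1) ∧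
        (Fsig V W σ n ⊓ W 0) ⊔ (Fsig V W σ n ⊓ W 1) = Fsig V W σ n) :=
  stmt10_general V W hV hW
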